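/- Every biframe homomorphism f : L → M factors as f = e ∘ f̄ where f̄ : L → (f(L), f[L₁], f[L₂]) is an extremal epimorphism of biframes and e : (f(L), f[L₁], f[L₂]) → M is a monomorphism, where f(L) is the pushout in Frm of f₁ ⊕ f₂ : L₁ ⊕ L₂ → f[L₁] ⊕ f[L₂] along the quotient map q_L : L₁ ⊕ L₂ → L₀. -/

import Mathlib

/-! Basic category-style notions for frames and biframes. -/

/-- `(K, i1, i2)` is a coproduct of the frames `L1` and `L2` in the category of frames. -/
def IsCoprod {L1 L2 K : Type} [Order.Frame L1] [Order.Frame L2] [Order.Frame K]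
    (i1 : FrameHom L1 K) (i2 : FrameHom L2 K) : Prop :=
  ∀ (Q : Type) [Order.Frame Q], ∀ (h1 : FrameHom L1 Q) (h2 : FrameHom L2 Q),
    ∃! k : FrameHom K Q, k.comp i1 = h1 ∧ k.comp i2 = h2

/-- `f' : C → P` (the pushout of `f` along `g`) and `g' : B → P` form a pushout square over
`f : A → B` and `g : A → C` in the category of frames. -/
def IsPushoutSquare {A B C P : Type} [Order.Frame A] [Order.Frame B] [Order.Frame C]
    [Order.Frame P] (f : FrameHom A B) (g : FrameHom A C)
    (f' : FrameHom C P) (g' : FrameHom B P) : Prop :=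
  g'.comp f = f'.comp g ∧
    ∀ (Q : Type) [Order.Frame Q], ∀ (u : FrameHom B Q) (v : FrameHom C Q),
      u.comp f = v.comp g → ∃! k : FrameHom P Q, k.comp g' = u ∧ k.comp f' = v

/-- A biframe `(L₀, L₁, L₂)`: an ambient frame `L₀` together with two component frames
`L₁, L₂` embedded in it by frame homomorphisms `e1, e2` (so the images are subframes),
such that the union of the images is a subbasis of `L₀`: every element of `L₀` is a join
of finite meets `e1 a ⊓ e2 b` of elements coming from the two components. -/
structure Biframe where
  L0 : Type
  L1 : Type
  L2 : Type
  [fr0 : Order.Frame L0]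
  [fr1 : Order.Frame L1]
  [fr2 : Order.Frame L2]
  e1 : FrameHom L1 L0
  e2 : FrameHom L2 L0
  inj1 : Function.Injective e1
  inj2 : Function.Injective e2
  gen : ∀ x : L0, ∃ A : Set (L1 × L2), x = sSup ((fun p => e1 p.1 ⊓ e2 p.2) '' A)

attribute [instance] Biframe.fr0 Biframe.fr1 Biframe.fr2

/-- A biframe homomorphism: a frame homomorphism of the ambient frames restricting to frame
homomorphisms of the component frames. -/
@[ext]
structure BiframeHom (L M : Biframe) where
  h0 : FrameHom L.L0 M.L0
  h1 : FrameHom L.L1 M.L1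
  h2 : FrameHom L.L2 M.L2
  comm1 : h0.comp L.e1 = M.e1.comp h1
  comm2 : h0.comp L.e2 = M.e2.comp h2

/-- Composition of biframe homomorphisms. -/
def BiframeHom.comp {L M N : Biframe} (g : BiframeHom M N) (f : BiframeHom L M) :
    BiframeHom L N where
  h0 := g.h0.comp f.h0
  h1 := g.h1.comp f.h1
  h2 := g.h2.comp f.h2
  comm1 := by rw [FrameHom.comp_assoc, f.comm1, ← FrameHom.comp_assoc, g.comm1,
    FrameHom.comp_assoc]
  comm2 := by rw [FrameHom.comp_assoc, f.comm2, ← FrameHom.comp_assoc, g.comm2,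
    FrameHom.comp_assoc]

/-- The identity biframe homomorphism. -/
def BiframeHom.id (L : Biframe) : BiframeHom L L where
  h0 := FrameHom.id _
  h1 := FrameHom.id _
  h2 := FrameHom.id _
  comm1 := by rw [FrameHom.id_comp, FrameHom.comp_id]
  comm2 := by rw [FrameHom.id_comp, FrameHom.comp_id]

/-- Monomorphisms in the category `BiFrm`. -/
def BiframeHom.IsMono {L M : Biframe} (m : BiframeHom L M) : Prop :=
  ∀ (N : Biframe) (g h : BiframeHom N L), m.comp g = m.comp h → g = h

/-- Epimorphisms in the category `BiFrm`. -/
def BiframeHom.IsEpi {L M : Biframe} (f : BiframeHom L M) : Prop :=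
  ∀ (N : Biframe) (g h : BiframeHom M N), g.comp f = h.comp f → g = h

/-- Isomorphisms in the category `BiFrm`. -/
def BiframeHom.IsIso {L M : Biframe} (f : BiframeHom L M) : Prop :=
  ∃ g : BiframeHom M L, g.comp f = BiframeHom.id L ∧ f.comp g = BiframeHom.id M

/-- Extremal epimorphisms in the category `BiFrm`: epimorphisms `f` such that whenever
`f = m ∘ h` with `m` a monomorphism, `m` is an isomorphism. -/
def BiframeHom.IsExtremalEpi {L M : Biframe} (f : BiframeHom L M) : Prop :=
  f.IsEpi ∧ ∀ (N : Biframe) (h : BiframeHom L N) (m : BiframeHom N M),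
    m.IsMono → f = m.comp h → m.IsIso

/-- The underlying frame homomorphism `f₀` of the biframe homomorphism `f` is the pushout of
`f₁ ⊕ f₂` along `q_L` in `Frm`: for any presentation of the coproducts `L₁ ⊕ L₂` and
`M₁ ⊕ M₂` with the canonical quotient maps `q_L`, `q_M`, and the induced map
`F = f₁ ⊕ f₂` between them, the square `(F, q_L, f₀, q_M)` is a pushout square. -/
def BiframeHom.IsCanonicalPushout {L M : Biframe} (f : BiframeHom L M) : Prop :=
  ∀ (K : Type) [Order.Frame K], ∀ (i1 : FrameHom L.L1 K) (i2 : FrameHom L.L2 K),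
    IsCoprod i1 i2 →
    ∀ qL : FrameHom K L.L0, qL.comp i1 = L.e1 → qL.comp i2 = L.e2 →
    ∀ (K' : Type) [Order.Frame K'], ∀ (j1 : FrameHom M.L1 K') (j2 : FrameHom M.L2 K'),
      IsCoprod j1 j2 →
      ∀ qM : FrameHom K' M.L0, qM.comp j1 = M.e1 → qM.comp j2 = M.e2 →
      ∀ F : FrameHom K K', F.comp i1 = j1.comp f.h1 → F.comp i2 = j2.comp f.h2 →
        IsPushoutSquare F qL f.h0 qM


/-!
`f(L)` is `L₀` modulo the frame congruence generated by `e₁ a ~ e₁ a'` (for `f₁ a = f₁ a'`) and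
`e₂ b ~ e₂ b'` (for `f₂ b = f₂ b'`), and `f[Lᵢ] = Lᵢ / ker fᵢ`. A homomorphism `h : L → P` factors
through `f̄` as soon as `ker fᵢ ⊆ ker hᵢ`; this gives `e` and the pushout property. Testing
against the chain `3`, a mono has injective components, so `f̄ = m ∘ h` with `m` mono forces
`ker fᵢ ⊆ ker hᵢ`, and the resulting `g` with `g ∘ f̄ = h` inverts `m`.
-/

open Function

section FrameQuotient

variable {X Y Q : Type*} [Order.Frame X] [Order.Frame Y] [Order.Frame Q]

namespace FrameHom

def ker (g : FrameHom X Y) : Set (X × X) := {p | g p.1 = g p.2}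

theorem ker_subset_ker_comp (h : FrameHom Y Q) (g : FrameHom X Y) : g.ker ⊆ (h.comp g).ker :=
  fun _ hp => congrArg h hp

theorem ker_comp_of_injective {h : FrameHom Y Q} (hh : Injective h) (g : FrameHom X Y) :
    (h.comp g).ker = g.ker :=
  Set.ext fun _ => hh.eq_iff

theorem map_sSup_le_map (g : FrameHom X Y) (x : X) : g (sSup {y | g y ≤ g x}) = g x := by
  rw [map_sSup]
  exact le_antisymm (sSup_le (Set.forall_mem_image.2 fun _ hy => hy)) (le_sSup ⟨x, le_rfl, rfl⟩)

def kerNucleus (g : FrameHom X Y) : Nucleus X where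
  toFun x := sSup {y | g y ≤ g x}
  map_inf' x y := by
    refine le_antisymm (le_inf (sSup_le_sSup fun z hz => ?_) (sSup_le_sSup fun z hz => ?_))
      (le_sSup ?_)
    · exact hz.trans (OrderHomClass.mono g inf_le_left)
    · exact hz.trans (OrderHomClass.mono g inf_le_right)
    · simp only [Set.mem_ofPred_eq, map_inf, map_sSup_le_map, le_refl]
  idempotent' x := by simp only [map_sSup_le_map, le_refl]
  le_apply' x := le_sSup (le_refl (g x))

theorem map_kerNucleus (g : FrameHom X Y) (x : X) : g (g.kerNucleus x) = g x :=
  g.map_sSup_le_map x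

end FrameHom

def Nucleus.ofRel (R : Set (X × X)) : Nucleus X := sInf {n | ∀ p ∈ R, n p.1 = n p.2}

namespace Nucleus

variable {R : Set (X × X)}

theorem ofRel_fst_eq_snd {p : X × X} (hp : p ∈ R) : ofRel R p.1 = ofRel R p.2 := by
  simp only [ofRel, sInf_apply]
  exact iInf_congr fun n => iInf_congr fun hn => hn p hp

theorem map_ofRel {g : FrameHom X Y} (hR : R ⊆ g.ker) (x : X) : g (ofRel R x) = g x := by
  have hle : ofRel R ≤ g.kerNucleus := sInf_le fun p hp => by
    show sSup {y | g y ≤ g p.1} = sSup {y | g y ≤ g p.2}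
    rw [show g p.1 = g p.2 from hR hp]
  exact le_antisymm ((OrderHomClass.mono g (hle x)).trans_eq (g.map_kerNucleus x))
    (OrderHomClass.mono g le_apply)

end Nucleus

/-- The quotient of `X` by the frame congruence generated by `R`, realised as the fixed points of
the least nucleus identifying the pairs of `R`. -/
abbrev FrameQuot (R : Set (X × X)) : Type _ := Set.range (Nucleus.ofRel R)

namespace FrameQuot

variable {R : Set (X × X)} {S : Set (Y × Y)}

def mk (R : Set (X × X)) : FrameHom X (FrameQuot R) := (Nucleus.ofRel R).restrict

theorem mk_surjective : Surjective (mk R) := Set.rangeFactorization_surjective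

theorem mk_eq_mk {p : X × X} (hp : p ∈ R) : mk R p.1 = mk R p.2 :=
  Subtype.ext (Nucleus.ofRel_fst_eq_snd hp)

def lift (v : FrameHom X Q) (hv : R ⊆ v.ker) : FrameHom (FrameQuot R) Q where
  toFun z := v z
  map_inf' a b := by rw [(Nucleus.ofRel R).giRestrict.gc.u_inf, map_inf]
  map_top' := by rw [(Nucleus.ofRel R).giRestrict.gc.u_top, map_top]
  map_sSup' s := by
    rw [← (Nucleus.ofRel R).giRestrict.l_sSup_u_image s]
    show v (Nucleus.ofRel R _) = _
    rw [Nucleus.map_ofRel hv, map_sSup, Set.image_image]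

theorem lift_mk {v : FrameHom X Q} (hv : R ⊆ v.ker) (x : X) : lift v hv (mk R x) = v x :=
  Nucleus.map_ofRel hv x

theorem lift_comp_mk {v : FrameHom X Q} (hv : R ⊆ v.ker) : (lift v hv).comp (mk R) = v :=
  FrameHom.ext (lift_mk hv)

theorem ker_mk_subset {v : FrameHom X Q} (hv : R ⊆ v.ker) : (mk R).ker ⊆ v.ker :=
  lift_comp_mk hv ▸ FrameHom.ker_subset_ker_comp _ _

theorem ker_mk_ker (g : FrameHom X Y) : (mk g.ker).ker = g.ker :=
  (ker_mk_subset subset_rfl).antisymm fun _ hp => mk_eq_mk hp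

theorem lift_injective {v : FrameHom X Q} (hv : R ⊆ v.ker) (hR : v.ker ⊆ R) :
    Injective (lift v hv) := by
  intro z z' h
  obtain ⟨x, rfl⟩ := mk_surjective z
  obtain ⟨x', rfl⟩ := mk_surjective z'
  rw [lift_mk, lift_mk] at h
  exact mk_eq_mk (p := (x, x')) (hR h)

def map (φ : FrameHom X Y) (h : R ⊆ Prod.map φ φ ⁻¹' S) :
    FrameHom (FrameQuot R) (FrameQuot S) :=
  lift ((mk S).comp φ) fun p hp => mk_eq_mk (p := Prod.map φ φ p) (h hp)

theorem map_comp_mk (φ : FrameHom X Y) (h : R ⊆ Prod.map φ φ ⁻¹' S) :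
    (map φ h).comp (mk R) = (mk S).comp φ :=
  lift_comp_mk _

theorem map_injective (φ : FrameHom X Y) (h : R ⊆ Prod.map φ φ ⁻¹' S)
    (hR : Prod.map φ φ ⁻¹' (mk S).ker ⊆ R) : Injective (map φ h) :=
  lift_injective _ hR

end FrameQuot

end FrameQuotient

section FiniteChains

variable {C Q : Type*} [CompleteLinearOrder C] [Finite C] [Order.Frame Q]

noncomputable def FrameHom.ofFiniteChain (g : C → Q) (hg : Monotone g) (hbot : g ⊥ = ⊥)
    (htop : g ⊤ = ⊤) : FrameHom C Q where
  toFun := g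
  map_inf' a b := by
    rcases le_total a b with hab | hab
    · rw [inf_eq_left.2 hab, inf_eq_left.2 (hg hab)]
    · rw [inf_eq_right.2 hab, inf_eq_right.2 (hg hab)]
  map_top' := htop
  map_sSup' s := by
    rcases s.eq_empty_or_nonempty with rfl | hs
    · simp [hbot]
    · exact le_antisymm (le_sSup (Set.mem_image_of_mem g (hs.csSup_mem s.toFinite)))
        (sSup_le (Set.forall_mem_image.2 fun _ hx => hg (le_sSup hx)))

instance (Q : Type*) [Order.Frame Q] : Subsingleton (FrameHom (Fin 2) Q) where
  allEq φ ψ := FrameHom.ext fun i => by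
    fin_cases i
    · exact (map_bot φ).trans (map_bot ψ).symm
    · exact (map_top φ).trans (map_top ψ).symm

noncomputable def FrameHom.fromFinTwo (Q : Type*) [Order.Frame Q] : FrameHom (Fin 2) Q :=
  .ofFiniteChain ![⊥, ⊤] (by intro i j h; fin_cases i <;> fin_cases j <;> simp_all) rfl rfl

theorem FrameHom.fromFinTwo_injective (hQ : (⊥ : Q) ≠ ⊤) : Injective (fromFinTwo Q) := by
  intro i j h
  fin_cases i <;> fin_cases j <;> first | rfl | exact absurd h hQ | exact absurd h.symm hQ

noncomputable def FrameHom.fromFinThree (a : Q) : FrameHom (Fin 3) Q :=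
  .ofFiniteChain ![⊥, a, ⊤] (by intro i j h; fin_cases i <;> fin_cases j <;> simp_all) rfl rfl

theorem FrameHom.comp_fromFinThree {Y : Type*} [Order.Frame Y] (g : FrameHom Q Y) (a : Q) :
    g.comp (fromFinThree a) = fromFinThree (g a) := by
  ext i
  change g (![⊥, a, ⊤] i) = ![⊥, g a, ⊤] i
  fin_cases i <;> simp

end FiniteChains

theorem IsCoprod.hom_ext {L1 L2 K Q : Type} [Order.Frame L1] [Order.Frame L2] [Order.Frame K]
    [Order.Frame Q] {i1 : FrameHom L1 K} {i2 : FrameHom L2 K} (hK : IsCoprod i1 i2)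
    {k k' : FrameHom K Q} (h1 : k.comp i1 = k'.comp i1) (h2 : k.comp i2 = k'.comp i2) :
    k = k' :=
  (hK Q (k'.comp i1) (k'.comp i2)).unique ⟨h1, h2⟩ ⟨rfl, rfl⟩

theorem FrameHom.map_sSup_image_inf {X X1 X2 Y Y1 Y2 : Type*} [Order.Frame X] [Order.Frame X1]
    [Order.Frame X2] [Order.Frame Y] [Order.Frame Y1] [Order.Frame Y2]
    {e1 : FrameHom X1 X} {e2 : FrameHom X2 X} {ε1 : FrameHom Y1 Y} {ε2 : FrameHom Y2 Y}
    {φ : FrameHom X Y} {φ1 : FrameHom X1 Y1} {φ2 : FrameHom X2 Y2}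
    (h1 : φ.comp e1 = ε1.comp φ1) (h2 : φ.comp e2 = ε2.comp φ2) (A : Set (X1 × X2)) :
    φ (sSup ((fun p => e1 p.1 ⊓ e2 p.2) '' A)) =
      sSup ((fun p => ε1 p.1 ⊓ ε2 p.2) '' (Prod.map φ1 φ2 '' A)) := by
  rw [map_sSup, Set.image_image, Set.image_image]
  refine congrArg sSup (Set.image_congr fun p _ => ?_)
  rw [map_inf, ← comp_apply, h1, ← comp_apply, h2]
  rfl

namespace BiframeHom

variable {L M : Biframe}

theorem ext_of_h1_h2 {g h : BiframeHom L M} (h1 : g.h1 = h.h1) (h2 : g.h2 = h.h2) : g = h := by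
  refine BiframeHom.ext (FrameHom.ext fun x => ?_) h1 h2
  obtain ⟨A, rfl⟩ := L.gen x
  rw [FrameHom.map_sSup_image_inf g.comm1 g.comm2, FrameHom.map_sSup_image_inf h.comm1 h.comm2,
    h1, h2]

theorem isMono_of_injective (m : BiframeHom L M) (h1 : Injective m.h1)
    (h2 : Injective m.h2) : m.IsMono := fun _ _ _ hgh =>
  ext_of_h1_h2 (FrameHom.ext fun x => h1 (DFunLike.congr_fun (congrArg BiframeHom.h1 hgh) x))
    (FrameHom.ext fun x => h2 (DFunLike.congr_fun (congrArg BiframeHom.h2 hgh) x))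

end BiframeHom

/-- `Fin 3` is the free frame on one generator and `Fin 2` the initial frame, so homomorphisms out
of `chainFst` pick out an element of the first component. -/
noncomputable abbrev Biframe.chainFst : Biframe where
  L0 := Fin 3
  L1 := Fin 3
  L2 := Fin 2
  e1 := FrameHom.id _
  e2 := FrameHom.fromFinTwo _
  inj1 := injective_id
  inj2 := FrameHom.fromFinTwo_injective (by decide)
  gen x := ⟨{(x, ⊤)}, by simp⟩

noncomputable abbrev Biframe.chainSnd : Biframe where
  L0 := Fin 3
  L1 := Fin 2
  L2 := Fin 3
  e1 := FrameHom.fromFinTwo _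
  e2 := FrameHom.id _
  inj1 := FrameHom.fromFinTwo_injective (by decide)
  inj2 := injective_id
  gen x := ⟨{(⊤, x)}, by simp⟩

noncomputable def BiframeHom.ofFst {P : Biframe} (a : P.L1) : BiframeHom Biframe.chainFst P where
  h0 := P.e1.comp (FrameHom.fromFinThree a)
  h1 := FrameHom.fromFinThree a
  h2 := FrameHom.fromFinTwo _
  comm1 := rfl
  comm2 := Subsingleton.elim _ _

noncomputable def BiframeHom.ofSnd {P : Biframe} (b : P.L2) : BiframeHom Biframe.chainSnd P where
  h0 := P.e2.comp (FrameHom.fromFinThree b)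
  h1 := FrameHom.fromFinTwo _
  h2 := FrameHom.fromFinThree b
  comm1 := Subsingleton.elim _ _
  comm2 := rfl

namespace BiframeHom.IsMono

variable {L M : Biframe} {m : BiframeHom L M}

theorem injective_h1 (hm : m.IsMono) : Injective m.h1 := by
  intro a b hab
  have h := hm _ (ofFst a) (ofFst b) (ext_of_h1_h2
    (show m.h1.comp (.fromFinThree a) = m.h1.comp (.fromFinThree b) by
      rw [FrameHom.comp_fromFinThree, FrameHom.comp_fromFinThree, hab])
    (Subsingleton.elim _ _))
  exact DFunLike.congr_fun (congrArg BiframeHom.h1 h) (1 : Fin 3)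

theorem injective_h2 (hm : m.IsMono) : Injective m.h2 := by
  intro a b hab
  have h := hm _ (ofSnd a) (ofSnd b) (ext_of_h1_h2 (Subsingleton.elim _ _)
    (show m.h2.comp (.fromFinThree a) = m.h2.comp (.fromFinThree b) by
      rw [FrameHom.comp_fromFinThree, FrameHom.comp_fromFinThree, hab]))
  exact DFunLike.congr_fun (congrArg BiframeHom.h2 h) (1 : Fin 3)

end BiframeHom.IsMono

namespace BiframeHom

open FrameHom FrameQuot

variable {L M P : Biframe} (f : BiframeHom L M)

def rel0 : Set (L.L0 × L.L0) :=
  Prod.map L.e1 L.e1 '' f.h1.ker ∪ Prod.map L.e2 L.e2 '' f.h2.ker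

theorem ker_h1_subset_preimage_rel0 : f.h1.ker ⊆ Prod.map L.e1 L.e1 ⁻¹' f.rel0 :=
  Set.image_subset_iff.1 Set.subset_union_left

theorem ker_h2_subset_preimage_rel0 : f.h2.ker ⊆ Prod.map L.e2 L.e2 ⁻¹' f.rel0 :=
  Set.image_subset_iff.1 Set.subset_union_right

theorem rel0_subset_ker {Q : Type} [Order.Frame Q] {v : FrameHom L.L0 Q}
    (h1 : f.h1.ker ⊆ (v.comp L.e1).ker) (h2 : f.h2.ker ⊆ (v.comp L.e2).ker) : f.rel0 ⊆ v.ker :=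
  Set.union_subset (Set.image_subset_iff.2 h1) (Set.image_subset_iff.2 h2)

theorem rel0_subset_ker_h0 (h : BiframeHom L P) (h1 : f.h1.ker ⊆ h.h1.ker)
    (h2 : f.h2.ker ⊆ h.h2.ker) : f.rel0 ⊆ h.h0.ker :=
  f.rel0_subset_ker (by rwa [h.comm1, ker_comp_of_injective P.inj1])
    (by rwa [h.comm2, ker_comp_of_injective P.inj2])

theorem preimage_ker_mk_rel0_subset_ker_h1 :
    Prod.map L.e1 L.e1 ⁻¹' (FrameQuot.mk f.rel0).ker ⊆ f.h1.ker := by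
  calc Prod.map L.e1 L.e1 ⁻¹' (FrameQuot.mk f.rel0).ker
      ⊆ (f.h0.comp L.e1).ker :=
        Set.preimage_mono (ker_mk_subset (f.rel0_subset_ker_h0 f subset_rfl subset_rfl))
    _ = f.h1.ker := by rw [f.comm1, ker_comp_of_injective M.inj1]

theorem preimage_ker_mk_rel0_subset_ker_h2 :
    Prod.map L.e2 L.e2 ⁻¹' (FrameQuot.mk f.rel0).ker ⊆ f.h2.ker := by
  calc Prod.map L.e2 L.e2 ⁻¹' (FrameQuot.mk f.rel0).ker
      ⊆ (f.h0.comp L.e2).ker :=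
        Set.preimage_mono (ker_mk_subset (f.rel0_subset_ker_h0 f subset_rfl subset_rfl))
    _ = f.h2.ker := by rw [f.comm2, ker_comp_of_injective M.inj2]

/-- `(f(L), f[L₁], f[L₂])`. -/
noncomputable abbrev image : Biframe where
  L0 := FrameQuot f.rel0
  L1 := FrameQuot f.h1.ker
  L2 := FrameQuot f.h2.ker
  e1 := map L.e1 f.ker_h1_subset_preimage_rel0
  e2 := map L.e2 f.ker_h2_subset_preimage_rel0
  inj1 := map_injective _ _ f.preimage_ker_mk_rel0_subset_ker_h1
  inj2 := map_injective _ _ f.preimage_ker_mk_rel0_subset_ker_h2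
  gen z := by
    obtain ⟨x, rfl⟩ := mk_surjective z
    obtain ⟨A, rfl⟩ := L.gen x
    exact ⟨_, map_sSup_image_inf (map_comp_mk _ _).symm (map_comp_mk _ _).symm A⟩

noncomputable def toImage : BiframeHom L f.image where
  h0 := FrameQuot.mk f.rel0
  h1 := FrameQuot.mk f.h1.ker
  h2 := FrameQuot.mk f.h2.ker
  comm1 := (map_comp_mk L.e1 f.ker_h1_subset_preimage_rel0).symm
  comm2 := (map_comp_mk L.e2 f.ker_h2_subset_preimage_rel0).symm

theorem toImage_isEpi : f.toImage.IsEpi := fun _ _ _ hgh =>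
  ext_of_h1_h2 ((cancel_right mk_surjective).1 (by exact congrArg BiframeHom.h1 hgh))
    ((cancel_right mk_surjective).1 (by exact congrArg BiframeHom.h2 hgh))

noncomputable def imageLift (h : BiframeHom L P) (h1 : f.h1.ker ⊆ h.h1.ker)
    (h2 : f.h2.ker ⊆ h.h2.ker) : BiframeHom f.image P where
  h0 := lift h.h0 (f.rel0_subset_ker_h0 h h1 h2)
  h1 := lift h.h1 h1
  h2 := lift h.h2 h2
  comm1 := by
    refine (cancel_right mk_surjective).1 ?_
    rw [FrameHom.comp_assoc, FrameHom.comp_assoc, lift_comp_mk, ← h.comm1, map_comp_mk,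
      ← FrameHom.comp_assoc, lift_comp_mk]
  comm2 := by
    refine (cancel_right mk_surjective).1 ?_
    rw [FrameHom.comp_assoc, FrameHom.comp_assoc, lift_comp_mk, ← h.comm2, map_comp_mk,
      ← FrameHom.comp_assoc, lift_comp_mk]

theorem imageLift_comp_toImage (h : BiframeHom L P) (h1 : f.h1.ker ⊆ h.h1.ker)
    (h2 : f.h2.ker ⊆ h.h2.ker) : (f.imageLift h h1 h2).comp f.toImage = h :=
  ext_of_h1_h2 (lift_comp_mk h1) (lift_comp_mk h2)

theorem toImage_isExtremalEpi : f.toImage.IsExtremalEpi := by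
  refine ⟨f.toImage_isEpi, fun P h m hm hfac => ?_⟩
  have hker1 : f.h1.ker ⊆ h.h1.ker := by
    rw [← ker_mk_ker f.h1, ← ker_comp_of_injective hm.injective_h1 h.h1]
    exact (congrArg (fun g : BiframeHom L f.image => g.h1.ker) hfac).le
  have hker2 : f.h2.ker ⊆ h.h2.ker := by
    rw [← ker_mk_ker f.h2, ← ker_comp_of_injective hm.injective_h2 h.h2]
    exact (congrArg (fun g : BiframeHom L f.image => g.h2.ker) hfac).le
  set g := f.imageLift h hker1 hker2
  -- `m ∘ g = id` since `f̄` is epi; then `g ∘ m = id` since `m` is mono.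
  have hmg : m.comp g = BiframeHom.id _ := f.toImage_isEpi _ _ _
    ((congrArg m.comp (f.imageLift_comp_toImage h hker1 hker2)).trans hfac.symm)
  refine ⟨g, hm _ _ _ ?_, hmg⟩
  change (m.comp g).comp m = m.comp (BiframeHom.id _)
  rw [hmg]
  rfl

theorem toImage_isCanonicalPushout : f.toImage.IsCanonicalPushout := by
  intro K _ i1 i2 hK qL hqL1 hqL2 K' _ j1 j2 hK' qN hqN1 hqN2 F hF1 hF2
  refine ⟨hK.hom_ext ?_ ?_, fun Q _ u v huv => ?_⟩
  · rw [FrameHom.comp_assoc, hF1, ← FrameHom.comp_assoc, hqN1, FrameHom.comp_assoc, hqL1]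
    exact f.toImage.comm1.symm
  · rw [FrameHom.comp_assoc, hF2, ← FrameHom.comp_assoc, hqN2, FrameHom.comp_assoc, hqL2]
    exact f.toImage.comm2.symm
  have hv1 : v.comp L.e1 = (u.comp j1).comp f.toImage.h1 := by
    rw [← hqL1, ← FrameHom.comp_assoc, ← huv, FrameHom.comp_assoc, hF1, FrameHom.comp_assoc]
  have hv2 : v.comp L.e2 = (u.comp j2).comp f.toImage.h2 := by
    rw [← hqL2, ← FrameHom.comp_assoc, ← huv, FrameHom.comp_assoc, hF2, FrameHom.comp_assoc]
  have hv : f.rel0 ⊆ v.ker := f.rel0_subset_ker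
    (by rw [hv1, ← ker_mk_ker f.h1]; exact ker_subset_ker_comp _ _)
    (by rw [hv2, ← ker_mk_ker f.h2]; exact ker_subset_ker_comp _ _)
  refine ⟨lift v hv, ⟨hK'.hom_ext ?_ ?_, lift_comp_mk hv⟩, fun k hk => ?_⟩
  · rw [FrameHom.comp_assoc, hqN1]
    refine (cancel_right mk_surjective).1 ?_
    rw [FrameHom.comp_assoc, map_comp_mk, ← FrameHom.comp_assoc, lift_comp_mk, hv1]; rfl
  · rw [FrameHom.comp_assoc, hqN2]
    refine (cancel_right mk_surjective).1 ?_
    rw [FrameHom.comp_assoc, map_comp_mk, ← FrameHom.comp_assoc, lift_comp_mk, hv2]; rfl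
  · exact (cancel_right mk_surjective).1 (hk.2.trans (lift_comp_mk hv).symm)

end BiframeHom

/-- Every biframe homomorphism `f : L → M` factors as `f = e ∘ f̄`, where
`f̄ : L → (f(L), f[L₁], f[L₂])` is an extremal epimorphism of biframes (in particular its
components are surjective and `f(L)` is the pushout in `Frm` of `f₁ ⊕ f₂` along the
quotient map `q_L : L₁ ⊕ L₂ → L₀`) and `e : (f(L), f[L₁], f[L₂]) → M` is a monomorphism
(with injective components). -/
theorem biframe_factorization {L M : Biframe} (f : BiframeHom L M) :
    ∃ (N : Biframe) (fbar : BiframeHom L N) (e : BiframeHom N M),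
      f = e.comp fbar ∧
      fbar.IsExtremalEpi ∧
      Function.Surjective fbar.h1 ∧ Function.Surjective fbar.h2 ∧
      fbar.IsCanonicalPushout ∧
      e.IsMono ∧ Function.Injective e.h1 ∧ Function.Injective e.h2 := by
  have he1 := FrameQuot.lift_injective (v := f.h1) subset_rfl subset_rfl
  have he2 := FrameQuot.lift_injective (v := f.h2) subset_rfl subset_rfl
  exact ⟨f.image, f.toImage, f.imageLift f subset_rfl subset_rfl,
    (f.imageLift_comp_toImage f _ _).symm, f.toImage_isExtremalEpi, FrameQuot.mk_surjective,
    FrameQuot.mk_surjective, f.toImage_isCanonicalPushout,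
    BiframeHom.isMono_of_injective _ he1 he2, he1, he2⟩
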